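/- arXiv:2306.00958 — 2 statements merged into one kernel-verified Lean document; each statement's English description precedes it below -/
import Mathlib

section
/- Let G and L be measurable spaces, let γ ∈ (0,1), and let S : G × L → ℝ be a bounded measurable similarity function. Let μ be a probability measure on G × L (the joint distribution p(g,l) of goal-frame/text pairs), let μ_L denote its marginal on L, and let ν be a probability measure on G (the marginal distribution D(g') of goal frames). If the video distribution consists solely of degenerate videos of repeated goal frames aligned with their text annotation (so that in the VIP-L objective the initial-frame distribution and the successive-frame distribution both reduce to the goal-frame distribution), then the VIP-L objective equals the InfoNCE objective plus 1, i.e. ∫_{G×L} −(1−γ)·S(g,l) dμ(g,l) + ∫_L log( ∫_G exp( S(g',l) + 1 − γ·S(g',l) ) dν(g') ) dμ_L(l) = ∫_{G×L} −log( exp((1−γ)·S(g,l)) / ∫_G exp((1−γ)·S(g',l)) dν(g') ) dμ(g,l) + 1. -/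
/-! Since `S (g, l) + 1 - γ * S (g, l) = (1 - γ) * S (g, l) + 1`, the log-sum-exp term of
VIP-L is the InfoNCE normaliser `log ∫ exp ((1 - γ) S (g', l)) dν(g')` plus 1, while the
InfoNCE integrand is `-(1 - γ) S (g, l)` plus that same normaliser. Boundedness of `S` bounds
the normaliser and makes every term integrable, so the integrals split and the two sides agree. -/

open MeasureTheory Real

section LogPartition

variable {G L : Type*} [MeasurableSpace G] [MeasurableSpace L] {ν : Measure G}

lemma integrable_exp_of_abs_le [IsFiniteMeasure ν] {h : G → ℝ} (hh : Measurable h) {C : ℝ}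
    (hC : ∀ g, |h g| ≤ C) : Integrable (fun g => exp (h g)) ν :=
  .of_bound hh.exp.aestronglyMeasurable (exp C) <| ae_of_all _ fun g => by
    rw [norm_of_nonneg (exp_pos _).le]
    exact exp_le_exp.2 ((le_abs_self _).trans (hC g))

lemma abs_log_integral_exp_le [IsProbabilityMeasure ν] {h : G → ℝ} (hh : Measurable h)
    {C : ℝ} (hC : ∀ g, |h g| ≤ C) : |log (∫ g, exp (h g) ∂ν)| ≤ C := by
  have hint := integrable_exp_of_abs_le (ν := ν) hh hC
  have hlower : exp (-C) ≤ ∫ g, exp (h g) ∂ν :=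
    calc exp (-C) = ∫ _, exp (-C) ∂ν := by simp
      _ ≤ ∫ g, exp (h g) ∂ν :=
        integral_mono (integrable_const _) hint fun g => exp_le_exp.2 (abs_le.1 (hC g)).1
  have hupper : ∫ g, exp (h g) ∂ν ≤ exp C :=
    calc ∫ g, exp (h g) ∂ν ≤ ∫ _, exp C ∂ν :=
          integral_mono hint (integrable_const _) fun g => exp_le_exp.2 (abs_le.1 (hC g)).2
      _ = exp C := by simp
  have hpos := (exp_pos (-C)).trans_le hlower
  exact abs_le.2 ⟨(le_log_iff_exp_le hpos).2 hlower, (log_le_iff_le_exp hpos).2 hupper⟩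

lemma log_integral_exp_add_const [NeZero ν] {h : G → ℝ}
    (hh : Integrable (fun g => exp (h g)) ν) (c : ℝ) :
    log (∫ g, exp (h g + c) ∂ν) = log (∫ g, exp (h g) ∂ν) + c := by
  simp_rw [exp_add, integral_mul_const]
  rw [log_mul (integral_exp_pos hh).ne' (exp_pos c).ne', log_exp]

noncomputable def logPartition (ν : Measure G) (f : G × L → ℝ) (l : L) : ℝ :=
  log (∫ g, exp (f (g, l)) ∂ν)

variable {f : G × L → ℝ}

lemma integrable_exp_section [IsFiniteMeasure ν] (hf : Measurable f) {C : ℝ}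
    (hC : ∀ p, |f p| ≤ C) (l : L) : Integrable (fun g => exp (f (g, l))) ν :=
  integrable_exp_of_abs_le (hf.comp measurable_prodMk_right) fun g => hC (g, l)

lemma measurable_logPartition [SFinite ν] (hf : Measurable f) :
    Measurable (logPartition ν f) :=
  hf.exp.stronglyMeasurable.integral_prod_left'.measurable.log

lemma abs_logPartition_le [IsProbabilityMeasure ν] (hf : Measurable f) {C : ℝ}
    (hC : ∀ p, |f p| ≤ C) (l : L) : |logPartition ν f l| ≤ C :=
  abs_log_integral_exp_le (hf.comp measurable_prodMk_right) fun g => hC (g, l)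

lemma integrable_logPartition [IsProbabilityMeasure ν] (ρ : Measure L) [IsFiniteMeasure ρ]
    (hf : Measurable f) {C : ℝ} (hC : ∀ p, |f p| ≤ C) : Integrable (logPartition ν f) ρ :=
  .of_bound (measurable_logPartition hf).aestronglyMeasurable C <|
    ae_of_all _ fun l => abs_logPartition_le hf hC l

lemma neg_log_exp_div_integral_exp [IsProbabilityMeasure ν] (hf : Measurable f) {C : ℝ}
    (hC : ∀ p, |f p| ≤ C) (p : G × L) :
    -log (exp (f p) / ∫ g, exp (f (g, p.2)) ∂ν) = -f p + logPartition ν f p.2 := by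
  have hZ := integral_exp_pos (integrable_exp_section (ν := ν) hf hC p.2)
  rw [log_div (exp_pos _).ne' hZ.ne', log_exp, logPartition]
  ring

end LogPartition

theorem vipL_degenerate_eq_infoNCE_add_one_general {G L : Type*} [MeasurableSpace G] [MeasurableSpace L]
    (γ : ℝ)
    (S : G × L → ℝ) (hS : Measurable S) (hbdd : ∃ C, ∀ p, |S p| ≤ C)
    (μ : Measure (G × L)) [IsProbabilityMeasure μ]
    (ν : Measure G) [IsProbabilityMeasure ν] :
    (∫ p, -((1 - γ) * S p) ∂μ) +
      (∫ l, Real.log (∫ g', Real.exp (S (g', l) + 1 - γ * S (g', l)) ∂ν) ∂(μ.map Prod.snd)) =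
    (∫ p, -Real.log (Real.exp ((1 - γ) * S p) /
        ∫ g', Real.exp ((1 - γ) * S (g', p.2)) ∂ν) ∂μ) + 1 := by
  obtain ⟨C, hC⟩ := hbdd
  set f : G × L → ℝ := fun p => (1 - γ) * S p with hf_def
  have hf : Measurable f := hS.const_mul _
  have hfC (p : G × L) : |f p| ≤ |1 - γ| * C := by
    rw [hf_def, abs_mul]
    exact mul_le_mul_of_nonneg_left (hC p) (abs_nonneg _)
  have : IsProbabilityMeasure (μ.map Prod.snd) :=
    Measure.isProbabilityMeasure_map measurable_snd.aemeasurable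
  have hZ : Integrable (logPartition ν f) (μ.map Prod.snd) := integrable_logPartition _ hf hfC
  have hvip (l : L) :
      log (∫ g', exp (S (g', l) + 1 - γ * S (g', l)) ∂ν) = logPartition ν f l + 1 := by
    have hexp (g' : G) : S (g', l) + 1 - γ * S (g', l) = f (g', l) + 1 := by
      rw [hf_def]; ring
    simp_rw [hexp]
    exact log_integral_exp_add_const (integrable_exp_section hf hfC l) 1
  calc (∫ p, -f p ∂μ) +
        ∫ l, log (∫ g', exp (S (g', l) + 1 - γ * S (g', l)) ∂ν) ∂(μ.map Prod.snd)
      = (∫ p, -f p ∂μ) + ((∫ p, logPartition ν f p.2 ∂μ) + 1) := by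
        simp_rw [hvip]
        rw [integral_add hZ (integrable_const 1), integral_map measurable_snd.aemeasurable
          hZ.aestronglyMeasurable]
        simp
    _ = (∫ p, (-f p + logPartition ν f p.2) ∂μ) + 1 := by
        have hnegf : Integrable (fun p => -f p) μ := .of_bound hf.neg.aestronglyMeasurable _ <|
          ae_of_all _ fun p => (abs_neg (f p)).trans_le (hfC p)
        have hZμ : Integrable (fun p => logPartition ν f p.2) μ :=
          hZ.comp_measurable measurable_snd
        rw [integral_add hnegf hZμ]
        ring
    _ = (∫ p, -log (exp (f p) / ∫ g', exp (f (g', p.2)) ∂ν) ∂μ) + 1 := by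
        simp_rw [neg_log_exp_div_integral_exp hf hfC]

/-- Proposition 1 (VIP-L on degenerate videos equals InfoNCE plus 1):
when the video distribution consists solely of degenerate videos of repeated goal
frames aligned with their text annotation, so that in the VIP-L objective the
initial-frame distribution and the successive-frame distribution both reduce to the
goal-frame distribution, the VIP-L objective equals the InfoNCE objective plus 1. -/
theorem vipL_degenerate_eq_infoNCE_add_one {G L : Type*} [MeasurableSpace G] [MeasurableSpace L]
    (γ : ℝ) (hγ : γ ∈ Set.Ioo (0 : ℝ) 1)
    (S : G × L → ℝ) (hS : Measurable S) (hbdd : ∃ C, ∀ p, |S p| ≤ C)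
    (μ : Measure (G × L)) [IsProbabilityMeasure μ]
    (ν : Measure G) [IsProbabilityMeasure ν] :
    (∫ p, -((1 - γ) * S p) ∂μ) +
      (∫ l, Real.log (∫ g', Real.exp (S (g', l) + 1 - γ * S (g', l)) ∂ν) ∂(μ.map Prod.snd)) =
    (∫ p, -Real.log (Real.exp ((1 - γ) * S p) /
        ∫ g', Real.exp ((1 - γ) * S (g', p.2)) ∂ν) ∂μ) + 1 :=
  vipL_degenerate_eq_infoNCE_add_one_general γ S hS hbdd μ ν
end

section
/- Let B be a positive natural number, γ ∈ (0,1), and let g_1,…,g_B ∈ G and l_1,…,l_B ∈ L be a batch of goal-frame/text pairs with S : G × L → ℝ any function. Then the empirical VIP-L loss on the degenerate videos ((g_i,g_i); l_i) equals the empirical InfoNCE loss plus 1: (1/B)·Σ_{i=1}^{B} ( −(1−γ)·S(g_i,l_i) ) + (1/B)·Σ_{i=1}^{B} log( (1/B)·Σ_{j=1}^{B} exp( S(g_j,l_i) + 1 − γ·S(g_j,l_i) ) ) = (1/B)·Σ_{i=1}^{B} ( −log( exp((1−γ)·S(g_i,l_i)) / ( (1/B)·Σ_{j=1}^{B} exp((1−γ)·S(g_j,l_i))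 ) ) ) + 1. -/
open Real Finset

/-! On a degenerate video the VIP-L exponent `S + 1 - γ S` is the InfoNCE exponent `(1 - γ) S`
shifted by the constant `1`, which leaves the log-mean-exp as `1 + log Zᵢ`, `Zᵢ` being the InfoNCE
partition average; the InfoNCE term is `-(1 - γ) Sᵢᵢ + log Zᵢ`. Averaging over the batch, the two
losses differ by the mean of the constant `1`. -/

theorem log_mul_sum_exp_add {ι : Type*} (s : Finset ι) (hs : s.Nonempty) {a : ℝ} (ha : 0 < a)
    (f : ι → ℝ) (c : ℝ) :
    log (a * ∑ j ∈ s, exp (f j + c)) = c + log (a * ∑ j ∈ s, exp (f j)) := by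
  have hsum : 0 < a * ∑ j ∈ s, exp (f j) := mul_pos ha (sum_pos (fun _ _ => exp_pos _) hs)
  simp only [exp_add, ← sum_mul]
  rw [← mul_assoc, log_mul hsum.ne' (exp_ne_zero c), log_exp, add_comm]

theorem neg_log_exp_div (x : ℝ) {Z : ℝ} (hZ : Z ≠ 0) : -log (exp x / Z) = -x + log Z := by
  rw [log_div (exp_ne_zero x) hZ, log_exp]
  ring

theorem empirical_vipL_eq_empirical_infoNCE_add_one_general {G L : Type*}
    (B : ℕ) (hB : 0 < B) (γ : ℝ)
    (g : Fin B → G) (l : Fin B → L) (S : G × L → ℝ) :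
    (1 / (B : ℝ)) * ∑ i, -((1 - γ) * S (g i, l i)) +
      (1 / (B : ℝ)) * ∑ i, Real.log
        ((1 / (B : ℝ)) * ∑ j, Real.exp (S (g j, l i) + 1 - γ * S (g j, l i))) =
    (1 / (B : ℝ)) * ∑ i, -Real.log
        (Real.exp ((1 - γ) * S (g i, l i)) /
          ((1 / (B : ℝ)) * ∑ j, Real.exp ((1 - γ) * S (g j, l i)))) + 1 := by
  have hBpos : (0 : ℝ) < B := by exact_mod_cast hB
  have hbatch : (univ : Finset (Fin B)).Nonempty := ⟨⟨0, hB⟩, mem_univ _⟩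
  have vip (i : Fin B) :
      log ((1 / (B : ℝ)) * ∑ j, exp (S (g j, l i) + 1 - γ * S (g j, l i))) =
        1 + log ((1 / (B : ℝ)) * ∑ j, exp ((1 - γ) * S (g j, l i))) := by
    simp only [show ∀ x : ℝ, x + 1 - γ * x = (1 - γ) * x + 1 from fun x => by ring]
    exact log_mul_sum_exp_add _ hbatch (by positivity) _ 1
  have partition_ne_zero (i : Fin B) : (1 / (B : ℝ)) * ∑ j, exp ((1 - γ) * S (g j, l i)) ≠ 0 :=
    (mul_pos (by positivity) (sum_pos (fun _ _ => exp_pos _) hbatch)).ne'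
  simp only [vip, neg_log_exp_div _ (partition_ne_zero _), sum_add_distrib, sum_const, card_univ,
    Fintype.card_fin, nsmul_eq_mul, mul_one]
  field_simp
  ring

/-- Finite-sample (minibatch) instance of Proposition 1: on a batch of `B`
goal-frame/text pairs, the empirical VIP-L loss on the degenerate videos
`((gᵢ, gᵢ); lᵢ)` equals the empirical InfoNCE loss plus 1. -/
theorem empirical_vipL_eq_empirical_infoNCE_add_one {G L : Type*}
    (B : ℕ) (hB : 0 < B) (γ : ℝ) (hγ : γ ∈ Set.Ioo (0 : ℝ) 1)
    (g : Fin B → G) (l : Fin B → L) (S : G × L → ℝ) :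
    (1 / (B : ℝ)) * ∑ i, -((1 - γ) * S (g i, l i)) +
      (1 / (B : ℝ)) * ∑ i, Real.log
        ((1 / (B : ℝ)) * ∑ j, Real.exp (S (g j, l i) + 1 - γ * S (g j, l i))) =
    (1 / (B : ℝ)) * ∑ i, -Real.log
        (Real.exp ((1 - γ) * S (g i, l i)) /
          ((1 / (B : ℝ)) * ∑ j, Real.exp ((1 - γ) * S (g j, l i)))) + 1 :=
  empirical_vipL_eq_empirical_infoNCE_add_one_general B hB γ g l S
end
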